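/- arXiv:1509.05156 — 2 statements merged into one kernel-verified Lean document; each statement's English description precedes it below -/
import Mathlib

section
/- If ω is a gl(m,ℝ)-valued 1-form on M and a: M → GL(m,ℝ) is smooth, then the gauge-transformed form ω' = a⁻¹ ω a + a⁻¹ da satisfies cs(ω') = cs(ω) + d tr(a⁻¹ ω ∧ da) - (1/3) tr((a⁻¹ da)³), where cs(θ) = tr(θ ∧ dθ + (2/3) θ³). -/
open scoped BigOperators
noncomputable section

/-- An abstract model of the algebra of (real-valued) smooth differential forms on a
smooth manifold `M`: a graded-commutative normed `ℝ`-algebra `Ω` together with an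
exterior differential `d`. Matrix-valued (`gl(m,ℝ)`-valued) forms are then matrices
with entries in `Ω`, their wedge product being matrix multiplication. -/
structure SmoothFormsOn (M : Type*) (Ω : Type*) [NormedRing Ω] [NormedAlgebra ℝ Ω] where
  /-- `IsHomog p a` means `a` is a homogeneous form of degree `p`. -/
  IsHomog : ℕ → Ω → Prop
  /-- The exterior differential. -/
  d : Ω →L[ℝ] Ω
  homog_add : ∀ p a b, IsHomog p a → IsHomog p b → IsHomog p (a + b)
  homog_smul : ∀ p (c : ℝ) a, IsHomog p a → IsHomog p (c • a)
  homog_mul : ∀ p q a b, IsHomog p a → IsHomog q b → IsHomog (p + q) (a * b)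
  homog_one : IsHomog 0 1
  homog_d : ∀ p a, IsHomog p a → IsHomog (p + 1) (d a)
  comm : ∀ p q a b, IsHomog p a → IsHomog q b → a * b = ((-1 : ℝ) ^ (p * q)) • (b * a)
  d_mul : ∀ p a b, IsHomog p a → d (a * b) = d a * b + ((-1 : ℝ) ^ p) • (a * d b)
  d_d : ∀ a, d (d a) = 0

variable {M : Type*} {Ω : Type*} [NormedRing Ω] [NormedAlgebra ℝ Ω]

/-- The exterior differential applied entrywise to a matrix-valued form. -/
def matd (F : SmoothFormsOn M Ω) {m : ℕ} (A : Matrix (Fin m) (Fin m) Ω) :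
    Matrix (Fin m) (Fin m) Ω :=
  Matrix.of fun i j => F.d (A i j)

/-- A matrix-valued form is homogeneous of degree `p` if all its entries are. -/
def MatHomog (F : SmoothFormsOn M Ω) {m : ℕ} (p : ℕ) (A : Matrix (Fin m) (Fin m) Ω) : Prop :=
  ∀ i j, F.IsHomog p (A i j)

/-- The Chern-Simons 3-form `cs(θ) = tr(θ ∧ dθ + (2/3) θ ∧ θ ∧ θ)` of a
`gl(m,ℝ)`-valued 1-form `θ`. -/
def cs (F : SmoothFormsOn M Ω) {m : ℕ} (θ : Matrix (Fin m) (Fin m) Ω) : Ω :=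
  (θ * matd F θ + ((2 : ℝ) / 3) • (θ * θ * θ)).trace

namespace CSaux

variable (F : SmoothFormsOn M Ω) {m : ℕ}

lemma homog_zero {p : ℕ} {x : Ω} (hx : F.IsHomog p x) : F.IsHomog p (0 : Ω) := by
  simpa using F.homog_smul p 0 x hx

lemma mathomog_mul {p q : ℕ} {A B : Matrix (Fin m) (Fin m) Ω}
    (hA : MatHomog F p A) (hB : MatHomog F q B) : MatHomog F (p + q) (A * B) := by
  intro i j
  rw [Matrix.mul_apply]
  refine Finset.sum_induction _ _ (fun x y hx hy => F.homog_add _ x y hx hy)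
    (homog_zero F (F.homog_mul p q _ _ (hA i i) (hB i j))) ?_
  intro k _
  exact F.homog_mul p q _ _ (hA i k) (hB k j)

lemma mathomog_matd {p : ℕ} {A : Matrix (Fin m) (Fin m) Ω}
    (hA : MatHomog F p A) : MatHomog F (p + 1) (matd F A) :=
  fun i j => F.homog_d p _ (hA i j)

lemma matd_add (A B : Matrix (Fin m) (Fin m) Ω) :
    matd F (A + B) = matd F A + matd F B := by
  ext i j
  simp [matd]

lemma matd_mul {p : ℕ} {A : Matrix (Fin m) (Fin m) Ω} (hA : MatHomog F p A)
    (B : Matrix (Fin m) (Fin m) Ω) :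
    matd F (A * B) = matd F A * B + ((-1 : ℝ) ^ p) • (A * matd F B) := by
  ext i j
  simp only [matd, Matrix.of_apply, Matrix.add_apply, Matrix.smul_apply, Matrix.mul_apply]
  rw [map_sum, Finset.smul_sum, ← Finset.sum_add_distrib]
  refine Finset.sum_congr rfl fun k _ => ?_
  exact F.d_mul p _ _ (hA i k)

lemma matd_matd (A : Matrix (Fin m) (Fin m) Ω) : matd F (matd F A) = 0 := by
  ext i j
  simp [matd, F.d_d]

lemma d_one : F.d (1 : Ω) = 0 := by
  have h := F.d_mul 0 1 1 F.homog_one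
  simp only [mul_one, one_mul, pow_zero, one_smul] at h
  have h2 : F.d (1 : Ω) + F.d 1 = F.d 1 + 0 := by rw [add_zero]; exact h.symm
  exact add_left_cancel h2

lemma matd_one : matd F (1 : Matrix (Fin m) (Fin m) Ω) = 0 := by
  ext i j
  simp only [matd, Matrix.of_apply, Matrix.one_apply, Matrix.zero_apply]
  split <;> simp [d_one]

lemma trace_matd (A : Matrix (Fin m) (Fin m) Ω) :
    (matd F A).trace = F.d A.trace := by
  simp [Matrix.trace, Matrix.diag, matd, map_sum]

lemma trace_comm' {p q : ℕ} {A B : Matrix (Fin m) (Fin m) Ω}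
    (hA : MatHomog F p A) (hB : MatHomog F q B) :
    (A * B).trace = ((-1 : ℝ) ^ (p * q)) • (B * A).trace := by
  have key : ∀ i j, A i j * B j i = ((-1 : ℝ) ^ (p * q)) • (B j i * A i j) :=
    fun i j => F.comm p q _ _ (hA i j) (hB j i)
  simp only [Matrix.trace, Matrix.diag, Matrix.mul_apply, key, ← Finset.smul_sum]
  rw [Finset.sum_comm]

end CSaux

/-- If `ω` is a `gl(m,ℝ)`-valued 1-form on `M` and `a : M → GL(m,ℝ)` is
smooth (a matrix of 0-forms, invertible), then the gauge-transformed form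
`ω' = a⁻¹ ω a + a⁻¹ da` satisfies
`cs(ω') = cs(ω) + d tr(a⁻¹ ω ∧ da) - (1/3) tr((a⁻¹ da)³)`. -/
theorem cs_gauge_transformation (F : SmoothFormsOn M Ω) {m : ℕ}
    (ω a ainv : Matrix (Fin m) (Fin m) Ω)
    (hω : MatHomog F 1 ω) (ha : MatHomog F 0 a) (hainv : MatHomog F 0 ainv)
    (hmul : a * ainv = 1) (hmul' : ainv * a = 1) :
    cs F (ainv * ω * a + ainv * matd F a)
      = cs F ω + F.d ((ainv * ω * matd F a).trace)
        - ((1 : ℝ) / 3) • ((ainv * matd F a) * (ainv * matd F a) * (ainv * matd F a)).trace := by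
  classical
  have K1 : ∀ X : Matrix (Fin m) (Fin m) Ω, a * (ainv * X) = X := fun X => by
    rw [← mul_assoc, hmul, one_mul]
  have K2 : ∀ X : Matrix (Fin m) (Fin m) Ω, ainv * (a * X) = X := fun X => by
    rw [← mul_assoc, hmul', one_mul]
  set σ := ainv * matd F a with hσdef
  set B := ainv * ω * a with hBdef
  set E := ainv * matd F ω * a with hEdef
  have hDa : MatHomog F 1 (matd F a) := CSaux.mathomog_matd F ha
  have hσh : MatHomog F 1 σ := CSaux.mathomog_mul F hainv hDa
  have hBh : MatHomog F 1 B := CSaux.mathomog_mul F (CSaux.mathomog_mul F hainv hω) ha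
  have hEh : MatHomog F 2 E :=
    CSaux.mathomog_mul F (CSaux.mathomog_mul F hainv (CSaux.mathomog_matd F hω)) ha
  have hDgσ : matd F a = a * σ := by rw [hσdef]; exact (K1 _).symm
  have hdainv : matd F ainv = -(σ * ainv) := by
    have h0 : matd F ainv * a + ainv * matd F a = 0 := by
      have h1 := CSaux.matd_mul F hainv a
      rw [hmul', CSaux.matd_one] at h1
      simpa using h1.symm
    have h1 : matd F ainv * a = -σ := by
      rw [hσdef]; exact eq_neg_of_add_eq_zero_left h0
    calc matd F ainv = matd F ainv * (a * ainv) := by rw [hmul, mul_one]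
      _ = matd F ainv * a * ainv := by rw [mul_assoc]
      _ = -σ * ainv := by rw [h1]
      _ = -(σ * ainv) := by rw [neg_mul]
  have hdσ : matd F σ = -(σ * σ) := by
    rw [hσdef, CSaux.matd_mul F hainv, CSaux.matd_matd, hdainv]
    simp only [pow_zero, one_smul, Matrix.mul_zero, add_zero]
    rw [neg_mul, mul_assoc, ← hσdef]
  have hdB : matd F B = -(σ * B) + E - B * σ := by
    rw [hBdef, hEdef]
    rw [CSaux.matd_mul F (CSaux.mathomog_mul F hainv hω) a]
    rw [CSaux.matd_mul F hainv ω, hdainv, hDgσ]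
    norm_num
    noncomm_ring
  have cyc : ∀ (p q : ℕ) (X Y : Matrix (Fin m) (Fin m) Ω), MatHomog F p X → MatHomog F q Y →
      Even (p * q) → (X * Y).trace = (Y * X).trace := by
    intro p q X Y hX hY hpq
    rw [CSaux.trace_comm' F hX hY, hpq.neg_one_pow, one_smul]
  have conj : ∀ (q : ℕ) (X : Matrix (Fin m) (Fin m) Ω), MatHomog F q X →
      (ainv * X * a).trace = X.trace := by
    intro q X hX
    rw [cyc (0 + q) 0 (ainv * X) a (CSaux.mathomog_mul F hainv hX) ha (by simp)]
    rw [K1]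
  have hωDa : ainv * ω * matd F a = B * σ := by
    rw [hDgσ, hBdef, ← mul_assoc]
  have hBσ2 : (σ * B * σ).trace = (σ * σ * B).trace := by
    rw [cyc 2 1 (σ * B) σ (CSaux.mathomog_mul F hσh hBh) hσh (by norm_num), ← mul_assoc]
  have hdtr : F.d ((ainv * ω * matd F a).trace) = (σ * E).trace - (σ * σ * B).trace := by
    rw [hωDa, ← CSaux.trace_matd F]
    rw [CSaux.matd_mul F hBh σ, hdB, hdσ]
    have hexp : (-(σ * B) + E - B * σ) * σ + ((-1 : ℝ) ^ 1) • (B * -(σ * σ))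
        = E * σ - σ * B * σ := by
      simp only [pow_one, neg_one_smul]
      noncomm_ring
    rw [hexp, Matrix.trace_sub]
    rw [cyc 2 1 E σ hEh hσh (by norm_num), hBσ2]
  have hcsω : cs F ω = (ω * matd F ω).trace + ((2 : ℝ) / 3) • (ω * ω * ω).trace := by
    unfold cs; rw [Matrix.trace_add, Matrix.trace_smul]
  have key1 : (B + σ) * (matd F B + matd F σ)
      = B * E + σ * E - (B * (σ * B) + B * B * σ + B * (σ * σ) + σ * (σ * B)
          + σ * (B * σ) + σ * σ * σ) := by
    rw [hdB, hdσ]; noncomm_ring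
  have key2 : (B + σ) * (B + σ) * (B + σ)
      = B * B * B + (B * B * σ + B * (σ * B) + σ * (B * B))
        + (B * (σ * σ) + σ * (B * σ) + σ * σ * B) + σ * σ * σ := by
    noncomm_ring
  have lhs1 : cs F (B + σ)
      = (B * E).trace + (σ * E).trace
        - ((B * (σ * B)).trace + (B * B * σ).trace + (B * (σ * σ)).trace
            + (σ * (σ * B)).trace + (σ * (B * σ)).trace + (σ * σ * σ).trace)
        + ((2 : ℝ) / 3) • ((B * B * B).trace
            + ((B * B * σ).trace + (B * (σ * B)).trace + (σ * (B * B)).trace)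
            + ((B * (σ * σ)).trace + (σ * (B * σ)).trace + (σ * σ * B).trace)
            + (σ * σ * σ).trace) := by
    unfold cs
    rw [CSaux.matd_add, key1, key2]
    simp only [Matrix.trace_add, Matrix.trace_sub, Matrix.trace_smul]
  have r1 : (B * (σ * B)).trace = (B * B * σ).trace := by
    rw [← mul_assoc, cyc 2 1 (B * σ) B (CSaux.mathomog_mul F hBh hσh) hBh (by norm_num),
      ← mul_assoc]
  have r2 : (σ * (B * σ)).trace = (σ * σ * B).trace := by
    rw [← mul_assoc, cyc 2 1 (σ * B) σ (CSaux.mathomog_mul F hσh hBh) hσh (by norm_num),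
      ← mul_assoc]
  have r3 : (B * (σ * σ)).trace = (σ * σ * B).trace :=
    cyc 1 2 B (σ * σ) hBh (CSaux.mathomog_mul F hσh hσh) (by norm_num)
  have r4 : (σ * (B * B)).trace = (B * B * σ).trace :=
    cyc 1 2 σ (B * B) hσh (CSaux.mathomog_mul F hBh hBh) (by norm_num)
  have r5 : (σ * (σ * B)).trace = (σ * σ * B).trace := by rw [← mul_assoc]
  have r6 : (B * E).trace = (ω * matd F ω).trace := by
    have h : B * E = ainv * (ω * matd F ω) * a := by
      rw [hBdef, hEdef]; simp only [mul_assoc, K1]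
    rw [h, conj 3 _ (CSaux.mathomog_mul F hω (CSaux.mathomog_matd F hω))]
  have r7 : (B * B * B).trace = (ω * ω * ω).trace := by
    have h : B * B * B = ainv * (ω * ω * ω) * a := by
      rw [hBdef]; simp only [mul_assoc, K1]
    rw [h, conj 3 _ (CSaux.mathomog_mul F (CSaux.mathomog_mul F hω hω) hω)]
  rw [lhs1, r1, r2, r3, r4, r5, r6, r7, hcsω, hdtr]
  module
end
end

section
/- Let (M,g) be an oriented Riemannian 3-manifold with orthonormal frame S, f a smooth function, and α the so(3)-valued 1-form α_{ij}(X) = ⟨S_j(f) S_i - S_i(f) S_j, X⟩ arising from the conformal variation of the connection form. Then tr(α ∧ R) = 0, where R is the curvature 2-form in the frame S. -/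
open scoped BigOperators
noncomputable section

/-- The summand `tr(α ∧ R)(S_k, S_h, S_l)`-contribution: here `Rc h l i j` are the
components `R_{hlij} = ⟨R(S_h,S_l) S_j, S_i⟩` of the curvature in the orthonormal
frame `S`, `df i = S_i(f)`, and `α_{ji}(S_k) = S_i(f) δ_{kj} - S_j(f) δ_{ki}`. -/
def alphaWedgeR (df : Fin 3 → ℝ) (Rc : Fin 3 → Fin 3 → Fin 3 → Fin 3 → ℝ)
    (k h l : Fin 3) : ℝ :=
  ∑ i, ∑ j,
    (df i * (if j = k then (1 : ℝ) else 0) - df j * (if i = k then (1 : ℝ) else 0))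
      * Rc h l i j

/-- On an oriented Riemannian 3-manifold with orthonormal frame `S`,
for a smooth function `f`, the `so(3)`-valued 1-form
`α_{ij}(X) = ⟨S_j(f) S_i - S_i(f) S_j, X⟩` satisfies `tr(α ∧ R) = 0`, where `R` is the
curvature 2-form in the frame `S`. Pointwise, the coefficient of the volume form of
`tr(α ∧ R)`, namely the sum over even permutations `(k,h,l)` of
`∑_{i,j} α_{ji}(S_k) R_{hlij}`, vanishes, as a consequence of the symmetries
(in particular the first Bianchi identity) of the curvature. -/
theorem trace_alpha_wedge_R_vanishes (df : Fin 3 → ℝ)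
    (Rc : Fin 3 → Fin 3 → Fin 3 → Fin 3 → ℝ)
    (hskew1 : ∀ h l i j, Rc h l i j = -Rc l h i j)
    (hskew2 : ∀ h l i j, Rc h l i j = -Rc h l j i)
    (hpair : ∀ h l i j, Rc h l i j = Rc j i h l)
    (hbianchi : ∀ h l i j, Rc h l i j + Rc l j i h + Rc j h i l = 0) :
    alphaWedgeR df Rc 0 1 2 + alphaWedgeR df Rc 1 2 0 + alphaWedgeR df Rc 2 0 1 = 0 := by
  simp only [alphaWedgeR, Fin.sum_univ_three]
  norm_num [Fin.ext_iff]
  linear_combination ((-1:ℝ) * df 0) * (hskew1 0 2 0 1) +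
    ((-1:ℝ) * df 0) * (hskew1 0 2 1 0) +
    ((-1:ℝ) * df 0) * (hskew2 0 1 0 2) +
    ((1:ℝ) * df 0) * (hskew2 0 2 0 1) +
    ((-1:ℝ) * df 0) * (hskew2 1 2 0 0) +
    ((2:ℝ) * df 0) * (hbianchi 0 1 0 2) +
    ((-2:ℝ) * df 1) * (hskew1 0 2 1 1) +
    ((-1:ℝ) * df 1) * (hskew2 0 1 1 2) +
    ((1:ℝ) * df 1) * (hskew2 0 2 1 1) +
    ((-1:ℝ) * df 1) * (hskew2 1 2 0 1) +
    ((2:ℝ) * df 1) * (hbianchi 0 1 1 2) +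
    ((-1:ℝ) * df 2) * (hskew1 0 2 1 2) +
    ((-1:ℝ) * df 2) * (hskew1 0 2 2 1) +
    ((-1:ℝ) * df 2) * (hskew2 0 1 2 2) +
    ((1:ℝ) * df 2) * (hskew2 0 2 1 2) +
    ((-1:ℝ) * df 2) * (hskew2 1 2 0 2) +
    ((2:ℝ) * df 2) * (hbianchi 0 1 2 2)
end
end
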